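/- In the discrete Heisenberg group H₃, any word with letters in {a,b} representing c^z b^y a^x satisfies 0 ≤ z ≤ xy, x ≥ 0, y ≥ 0, and the word has length x + y. -/

import Mathlib

/-! Since `c ^ z * b ^ y * a ^ x = ⟨x, y, z⟩`, the claim is about the coordinates of a product of
`a`s and `b`s. The elements with `0 ≤ x`, `0 ≤ y`, `0 ≤ z ≤ x * y` form a submonoid containing `a`
and `b` (the bound on `z` survives products because `(p.x + q.x) * (p.y + q.y)` exceeds
`p.x * p.y + q.x * q.y + p.x * q.y` by `q.x * p.y ≥ 0`), and every letter raises `x + y` by one. -/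

/-- The discrete Heisenberg group `H₃`: `⟨x, y, z⟩` encodes the 3×3 upper unitriangular
integer matrix `(1 x z; 0 1 y; 0 0 1)`, with matrix multiplication. -/
@[ext] structure Heis where
  x : ℤ
  y : ℤ
  z : ℤ

namespace Heis

instance : Mul Heis := ⟨fun p q => ⟨p.x + q.x, p.y + q.y, p.z + q.z + p.x * q.y⟩⟩
instance : One Heis := ⟨⟨0, 0, 0⟩⟩
instance : Inv Heis := ⟨fun p => ⟨-p.x, -p.y, p.x * p.y - p.z⟩⟩

theorem mul_def (p q : Heis) :
    p * q = ⟨p.x + q.x, p.y + q.y, p.z + q.z + p.x * q.y⟩ := rfl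
theorem one_def : (1 : Heis) = ⟨0, 0, 0⟩ := rfl
theorem inv_def (p : Heis) : p⁻¹ = ⟨-p.x, -p.y, p.x * p.y - p.z⟩ := rfl

instance : Group Heis where
  mul_assoc p q r := by
    simp only [mul_def, mk.injEq]
    refine ⟨by ring, by ring, by ring⟩
  one_mul p := by
    obtain ⟨px, py, pz⟩ := p
    simp only [one_def, mul_def, mk.injEq]
    refine ⟨by ring, by ring, by ring⟩
  mul_one p := by
    obtain ⟨px, py, pz⟩ := p
    simp only [one_def, mul_def, mk.injEq]
    refine ⟨by ring, by ring, by ring⟩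
  inv_mul_cancel p := by
    obtain ⟨px, py, pz⟩ := p
    simp only [inv_def, mul_def, one_def, mk.injEq]
    refine ⟨by ring, by ring, by ring⟩

/-- The generator `a` (the elementary matrix with a `1` in position (1,2)). -/
def a : Heis := ⟨1, 0, 0⟩
/-- The generator `b` (the elementary matrix with a `1` in position (2,3)). -/
def b : Heis := ⟨0, 1, 0⟩
/-- The commutator `c = [a,b] = a⁻¹b⁻¹ab` (the elementary matrix with a `1` in (1,3)). -/
def c : Heis := ⟨0, 0, 1⟩

/-- The standard generating set `S = {a, b, a⁻¹, b⁻¹}`. -/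
def S : Set Heis := {a, b, a⁻¹, b⁻¹}

/-- The word metric for the generating set `S`: the length of the shortest word with
letters in `S` leading from `g` to `h` in the Cayley graph. -/
noncomputable def wdist (g h : Heis) : ℕ :=
  sInf {n | ∃ l : List Heis, (∀ s ∈ l, s ∈ S) ∧ l.length = n ∧ g * l.prod = h}

@[simp] theorem a_zpow (n : ℤ) : a ^ n = ⟨n, 0, 0⟩ := by
  induction n using Int.induction_on with
  | zero => rfl
  | succ k ih => rw [zpow_add_one, ih]; ext <;> simp [a, mul_def]
  | pred k ih => rw [zpow_sub_one, ih]; ext <;> simp [a, inv_def, mul_def]; ring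

@[simp] theorem b_zpow (n : ℤ) : b ^ n = ⟨0, n, 0⟩ := by
  induction n using Int.induction_on with
  | zero => rfl
  | succ k ih => rw [zpow_add_one, ih]; ext <;> simp [b, mul_def]
  | pred k ih => rw [zpow_sub_one, ih]; ext <;> simp [b, inv_def, mul_def]; ring

@[simp] theorem c_zpow (n : ℤ) : c ^ n = ⟨0, 0, n⟩ := by
  induction n using Int.induction_on with
  | zero => rfl
  | succ k ih => rw [zpow_add_one, ih]; ext <;> simp [c, mul_def]
  | pred k ih => rw [zpow_sub_one, ih]; ext <;> simp [c, inv_def, mul_def]; ring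

theorem c_zpow_mul_b_zpow_mul_a_zpow (x y z : ℤ) : c ^ z * b ^ y * a ^ x = ⟨x, y, z⟩ := by
  ext <;> simp [mul_def]

def positiveCone : Submonoid Heis where
  carrier := {p | 0 ≤ p.z ∧ p.z ≤ p.x * p.y ∧ 0 ≤ p.x ∧ 0 ≤ p.y}
  one_mem' := by simp [one_def]
  mul_mem' := by
    rintro p q ⟨hpz, hpxy, hpx, hpy⟩ ⟨hqz, hqxy, hqx, hqy⟩
    refine ⟨?_, ?_, ?_, ?_⟩ <;> simp only [mul_def] <;> nlinarith [mul_nonneg hqx hpy]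

theorem a_mem_positiveCone : a ∈ positiveCone := by simp [positiveCone, a]

theorem b_mem_positiveCone : b ∈ positiveCone := by simp [positiveCone, b]

theorem list_prod_x_add_y {w : List Heis} (hw : ∀ s ∈ w, s = a ∨ s = b) :
    w.prod.x + w.prod.y = w.length := by
  induction w with
  | nil => rfl
  | cons s t ih =>
    rw [List.forall_mem_cons] at hw
    rcases hw.1 with rfl | rfl <;> simp [mul_def, a, b, ← ih hw.2] <;> ring

end Heis

open Heis in
/-- Any word with letters in `{a,b}` representing `c^z b^y a^x` satisfies
`0 ≤ z ≤ xy`, `x ≥ 0`, `y ≥ 0`, and has length `x + y`. -/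
theorem stmt11 (w : List Heis) (hw : ∀ s ∈ w, s = a ∨ s = b)
    (x y z : ℤ) (hrep : w.prod = c ^ z * b ^ y * a ^ x) :
    0 ≤ z ∧ z ≤ x * y ∧ 0 ≤ x ∧ 0 ≤ y ∧ (w.length : ℤ) = x + y := by
  rw [c_zpow_mul_b_zpow_mul_a_zpow] at hrep
  have hmem : w.prod ∈ positiveCone := positiveCone.list_prod_mem fun s hs => by
    rcases hw s hs with rfl | rfl
    exacts [a_mem_positiveCone, b_mem_positiveCone]
  have hlen := list_prod_x_add_y hw
  rw [hrep] at hmem hlen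
  exact ⟨hmem.1, hmem.2.1, hmem.2.2.1, hmem.2.2.2, hlen.symm⟩
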